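/- arXiv:1306.2385 — 5 statements merged into one kernel-verified Lean document; each statement's English description precedes it below -/
import Mathlib

section
/- Every finitely generated subgroup of GL_n(K), for K a field, is residually finite. -/
/-!
Malcev: the entries of the generators of `G` and of their inverses generate a finitely generated
subring `A` of `K`, and `G` lies in `GL n A`. Since `ℤ` is a Jacobson ring, so is `A`; as `A` is
reduced, a nonzero element of `A` survives modulo some maximal ideal `m`, and `A ⧸ m` is a field of
finite type over `ℤ`, hence finite. Reducing modulo `m` a nonzero entry of `g - 1` thus separates
`g` from `1` in the finite group `GL n (A ⧸ m)`.
-/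

open Matrix

instance Int.isJacobsonRing : IsJacobsonRing ℤ := by
  rw [isJacobsonRing_iff_prime_eq]
  intro P hP
  rcases eq_or_ne P ⊥ with rfl | hP0
  · refine le_antisymm (fun x hx => ?_) Ideal.le_jacobson
    by_contra hx0
    -- a prime larger than `|x|` cannot divide `x`
    obtain ⟨p, hxp, hp⟩ := Nat.exists_infinite_primes (x.natAbs + 1)
    have hmax : (Ideal.span {(p : ℤ)}).IsMaximal :=
      PrincipalIdealRing.isMaximal_of_irreducible (Nat.prime_iff_prime_int.mp hp).irreducible
    have hpx : (p : ℤ) ∣ x := Ideal.mem_span_singleton.mp (Ideal.mem_sInf.mp hx ⟨bot_le, hmax⟩)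
    have := Int.natAbs_le_of_dvd_ne_zero hpx (fun h => hx0 (h ▸ Ideal.zero_mem _))
    omega
  · exact Ideal.jacobson_eq_self_of_isMaximal (H := hP.isMaximal hP0)

theorem finite_of_finiteType_int (L : Type*) [Field L] [Algebra ℤ L] [Algebra.FiniteType ℤ L] :
    Finite L := by
  obtain rfl : ‹Algebra ℤ L› = Ring.toIntAlgebra L := Subsingleton.elim _ _
  have : Module.Finite ℤ L := finite_of_finite_type_of_isJacobsonRing ℤ L
  -- in characteristic zero `L` would be a field integral over `ℤ`, forcing `ℤ` to be a field
  have hchar : ringChar L ≠ 0 := by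
    intro h
    have : CharP L 0 := h ▸ ringChar.charP L
    have : CharZero L := CharP.charP_to_charZero L
    exact Int.not_isField (isField_of_isIntegral_of_isField (algebraMap ℤ L).injective_int
      (Field.toIsField L))
  have : NeZero (ringChar L) := ⟨hchar⟩
  let : Algebra (ZMod (ringChar L)) L := ZMod.algebra L _
  have : Module.Finite (ZMod (ringChar L)) L :=
    Module.Finite.of_restrictScalars_finite ℤ (ZMod (ringChar L)) L
  exact Module.finite_of_finite (ZMod (ringChar L))

theorem exists_isMaximal_notMem_of_isReduced {A : Type*} [CommRing A] [IsJacobsonRing A]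
    [IsReduced A] {a : A} (ha : a ≠ 0) : ∃ m : Ideal A, m.IsMaximal ∧ a ∉ m := by
  by_contra! h
  have : a ∈ (⊥ : Ideal A).jacobson := Ideal.mem_sInf.mpr fun {m} hm => h m hm.2
  rw [← Ideal.radical_eq_jacobson] at this
  exact ha (mem_nilradical.mp this).eq_zero

namespace Group.ResiduallyFinite

theorem of_injective {G H : Type*} [Group G] [Group H] [ResiduallyFinite H] (f : G →* H)
    (hf : Function.Injective f) : ResiduallyFinite G := by
  rw [residuallyFinite_iff_forall_finiteIndexNormalSubgroup]
  intro g hg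
  exact hf <| (eq_one_iff_forall_finiteIndexNormalSubroup (f g) fun K => hg (K.comap f)).trans
    f.map_one.symm

theorem exists_monoidHom_finite_ne_one {G : Type*} [Group G] [ResiduallyFinite G] {g : G}
    (hg : g ≠ 1) : ∃ (Q : Type) (_ : Group Q), Finite Q ∧ ∃ f : G →* Q, f g ≠ 1 := by
  obtain ⟨N, hgN⟩ := exists_finiteIndexNormalSubgroup_notMem g hg
  refine ⟨Shrink.{0} (G ⧸ N.toSubgroup), inferInstance, inferInstance,
    Shrink.mulEquiv.symm.toMonoidHom.comp (QuotientGroup.mk' N.toSubgroup), ?_⟩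
  simpa [FiniteIndexNormalSubgroup.mem_toSubgroup_iff] using hgN

theorem of_le_range {H L : Type*} [Group H] [Group L] [ResiduallyFinite H] (φ : H →* L)
    (hφ : Function.Injective φ) {G : Subgroup L} (hG : G ≤ φ.range) : ResiduallyFinite G :=
  of_injective ((MonoidHom.ofInjective hφ).symm.toMonoidHom.comp (Subgroup.inclusion hG))
    ((MonoidHom.ofInjective hφ).symm.injective.comp (Subgroup.inclusion_injective hG))

end Group.ResiduallyFinite

namespace Matrix.GeneralLinearGroup

variable {n : Type*} [Fintype n] [DecidableEq n]

instance residuallyFinite (A : Type*) [CommRing A] [IsReduced A] [Algebra.FiniteType ℤ A] :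
    Group.ResiduallyFinite (GL n A) := by
  refine Group.residuallyFinite_of_forall_exists_finite_monoidHom fun g hg => ?_
  obtain ⟨i, j, hij⟩ : ∃ i j, g i j ≠ (1 : Matrix n n A) i j := by
    by_contra! h
    exact hg (Units.ext (Matrix.ext h))
  have : IsJacobsonRing A := isJacobsonRing_of_finiteType (A := ℤ)
  obtain ⟨m, hm, hgm⟩ := exists_isMaximal_notMem_of_isReduced (sub_ne_zero.mpr hij)
  let : Field (A ⧸ m) := Ideal.Quotient.field m
  have : Algebra.FiniteType ℤ (A ⧸ m) :=
    Algebra.FiniteType.of_surjective (Ideal.Quotient.mkₐ ℤ m) (Ideal.Quotient.mkₐ_surjective ℤ m)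
  have : Finite (A ⧸ m) := finite_of_finiteType_int (A ⧸ m)
  refine ⟨GL n (A ⧸ m), inferInstance, inferInstance, map (Ideal.Quotient.mk m), fun h => hgm ?_⟩
  have hentry := congrArg (fun x : GL n (A ⧸ m) => x i j) h
  simp only [GeneralLinearGroup.map_apply, Units.val_one] at hentry
  rw [← Ideal.Quotient.eq_zero_iff_mem, map_sub, hentry]
  by_cases hij' : i = j <;> simp [Matrix.one_apply, hij']

theorem map_injective {R S : Type*} [CommRing R] [CommRing S] {f : R →+* S}
    (hf : Function.Injective f) : Function.Injective (map (n := n) f) := fun _ _ hgh =>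
  Units.ext <| Matrix.map_injective hf (congrArg Units.val hgh)

theorem mem_range_map_val {R S : Type*} [CommRing R] [CommRing S] [Algebra R S]
    (A : Subalgebra R S) {g : GL n S} (hg : ∀ i j, g i j ∈ A) (hg' : ∀ i j, g⁻¹ i j ∈ A) :
    g ∈ (map (A.val : A →+* S)).range := by
  have hinj : Function.Injective ((A.val : A →+* S).mapMatrix (m := n)) :=
    Matrix.map_injective Subtype.val_injective
  refine ⟨⟨Matrix.of fun i j => ⟨g i j, hg i j⟩, Matrix.of fun i j => ⟨g⁻¹ i j, hg' i j⟩,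
    hinj ?_, hinj ?_⟩, rfl⟩
  · rw [map_mul, map_one]; exact g.mul_inv
  · rw [map_mul, map_one]; exact g.inv_mul

theorem exists_fg_le_range_map_val {S : Type*} [CommRing S] {G : Subgroup (GL n S)}
    (hG : G.FG) : ∃ A : Subalgebra ℤ S, A.FG ∧ G ≤ (map (A.val : A →+* S)).range := by
  obtain ⟨T, rfl⟩ := hG
  let entries : Set S := ⋃ g ∈ (T : Set (GL n S)),
    Set.range (fun p : n × n => g p.1 p.2) ∪ Set.range (fun p : n × n => g⁻¹ p.1 p.2)
  have hfin : entries.Finite :=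
    T.finite_toSet.biUnion fun _ _ => (Set.finite_range _).union (Set.finite_range _)
  refine ⟨Algebra.adjoin ℤ entries, Subalgebra.fg_def.mpr ⟨entries, hfin, rfl⟩,
    (Subgroup.closure_le _).mpr fun g hg => mem_range_map_val _ ?_ ?_⟩
  · exact fun i j => Algebra.subset_adjoin (Set.mem_biUnion hg (Or.inl ⟨(i, j), rfl⟩))
  · exact fun i j => Algebra.subset_adjoin (Set.mem_biUnion hg (Or.inr ⟨(i, j), rfl⟩))

end Matrix.GeneralLinearGroup

/-- Malcev's theorem: every finitely generated subgroup of `GL n K`, for `K` a field,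
is residually finite. -/
theorem malcev_residually_finite (n : ℕ) (K : Type*) [Field K]
    (G : Subgroup (GL (Fin n) K)) (hfg : Group.FG G) :
    ∀ g : G, g ≠ 1 →
      ∃ (Q : Type) (_ : Group Q), Finite Q ∧ ∃ f : G →* Q, f g ≠ 1 := by
  obtain ⟨A, hA, hGA⟩ := GeneralLinearGroup.exists_fg_le_range_map_val
    ((Group.fg_iff_subgroup_fg G).mp hfg)
  have : Algebra.FiniteType ℤ A := (Subalgebra.fg_iff_finiteType A).mp hA
  have : Group.ResiduallyFinite G :=
    .of_le_range _ (GeneralLinearGroup.map_injective Subtype.val_injective) hGA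
  exact fun g hg => Group.ResiduallyFinite.exists_monoidHom_finite_ne_one hg
end

section
/- If a group G has finite-index subgroups H_p and H_q that are residually p-finite and residually q-finite respectively, for distinct primes p and q, then G has a finite-index torsion-free subgroup. -/
/-! In a residually finite `p`-group every nontrivial element has order divisible by `p`, since
its image in some finite `p`-group is nontrivial. If the group is also a residually finite
`q`-group, a nontrivial element `g` of finite order has a power of order exactly `p`, and `q` must
divide that order too, so `p = q`. Both residual properties pass to the finite-index subgroup
`Hp ⊓ Hq`. -/

open Function

def IsResiduallyFinitePGroup (p : ℕ) (G : Type*) [Group G] : Prop :=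
  ∀ g : G, g ≠ 1 → ∃ (Q : Type) (_ : Group Q), Finite Q ∧ IsPGroup p Q ∧ ∃ f : G →* Q, f g ≠ 1

namespace IsResiduallyFinitePGroup

variable {p q : ℕ} {G H : Type*} [Group G] [Group H]

theorem of_injective (hG : IsResiduallyFinitePGroup p G) (φ : H →* G) (hφ : Injective φ) :
    IsResiduallyFinitePGroup p H := by
  intro h hh
  obtain ⟨Q, _, hQ, hpQ, f, hf⟩ := hG (φ h) ((map_ne_one_iff φ hφ).mpr hh)
  exact ⟨Q, _, hQ, hpQ, f.comp φ, hf⟩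

theorem dvd_orderOf [Fact p.Prime] (hG : IsResiduallyFinitePGroup p G) {g : G} (hg : g ≠ 1) :
    p ∣ orderOf g := by
  obtain ⟨Q, _, _, hpQ, f, hf⟩ := hG g hg
  exact (hpQ.dvd_orderOf hf).trans (orderOf_map_dvd f g)

theorem eq_one_of_isOfFinOrder [hp : Fact p.Prime] [hq : Fact q.Prime] (hpq : p ≠ q)
    (hGp : IsResiduallyFinitePGroup p G) (hGq : IsResiduallyFinitePGroup q G) {g : G}
    (hfin : IsOfFinOrder g) : g = 1 := by
  by_contra hg
  have hx : orderOf (g ^ (orderOf g / p)) = p :=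
    orderOf_pow_orderOf_div hfin.orderOf_pos.ne' (hGp.dvd_orderOf hg)
  have hx1 : g ^ (orderOf g / p) ≠ 1 := fun h => hp.out.one_lt.ne' (by rw [← hx, h, orderOf_one])
  have hqp : q ∣ p := hx ▸ hGq.dvd_orderOf hx1
  exact hpq ((Nat.prime_dvd_prime_iff_eq hq.out hp.out).mp hqp).symm

end IsResiduallyFinitePGroup

/-- If a group `G` has finite-index subgroups `Hp` and `Hq` that are residually `p`-finite
and residually `q`-finite respectively, for distinct primes `p` and `q`, then `G` has a
finite-index torsion-free subgroup. -/
theorem virtually_torsion_free_of_virtually_residually_p_and_q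
    {G : Type*} [Group G] (p q : ℕ) (hp : p.Prime) (hq : q.Prime) (hpq : p ≠ q)
    (Hp Hq : Subgroup G) (hHp : Hp.FiniteIndex) (hHq : Hq.FiniteIndex)
    (hresp : ∀ h : Hp, h ≠ 1 →
      ∃ (Q : Type) (_ : Group Q), Finite Q ∧ IsPGroup p Q ∧ ∃ f : Hp →* Q, f h ≠ 1)
    (hresq : ∀ h : Hq, h ≠ 1 →
      ∃ (Q : Type) (_ : Group Q), Finite Q ∧ IsPGroup q Q ∧ ∃ f : Hq →* Q, f h ≠ 1) :
    ∃ K : Subgroup G, K.FiniteIndex ∧ ∀ k : K, IsOfFinOrder k → k = 1 := by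
  have := Fact.mk hp
  have := Fact.mk hq
  have hKp : IsResiduallyFinitePGroup p ↥(Hp ⊓ Hq) :=
    IsResiduallyFinitePGroup.of_injective hresp _ (Subgroup.inclusion_injective inf_le_left)
  have hKq : IsResiduallyFinitePGroup q ↥(Hp ⊓ Hq) :=
    IsResiduallyFinitePGroup.of_injective hresq _ (Subgroup.inclusion_injective inf_le_right)
  exact ⟨Hp ⊓ Hq, inferInstance, fun k => hKp.eq_one_of_isOfFinOrder hpq hKq⟩
end

section
/- For any euclidean domain A, SL_n(A) is generated by the elementary matrices 1 + a·e_{ij} with a ∈ A and i ≠ j. -/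
/-!
Gaussian elimination by row operations alone. The matrices whose columns outside a set `t` are
those of the identity form a subgroup, and it contains every transvection adding a multiple of a
row in `t` to another row. Adding a column `k` to `t`, the Euclidean algorithm on the rows in `t`
makes the pivot `M k k` divide every other entry of column `k` in these rows; it is then a unit,
because row `k` of `M⁻¹` vanishes outside `t` and so `1 = (M⁻¹ * M) k k` is a multiple of `M k k`.
A second row in `t` turns this unit into `1`; if there is none, `M k k = det M = 1`. Finally the
pivot row clears the rest of column `k`.
-/

namespace Matrix.SpecialLinearGroup

variable {ι A : Type*} [Fintype ι] [DecidableEq ι]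

section CommRing

variable [CommRing A]

variable (ι A) in
def elementarySubgroup : Subgroup (SpecialLinearGroup ι A) :=
  Subgroup.closure
    {M | ∃ (a : A) (i j : ι), i ≠ j ∧ (M : Matrix ι ι A) = 1 + Matrix.single i j a}

def fixingCols (s : Set ι) : Subgroup (SpecialLinearGroup ι A) where
  carrier := {M | ∀ j ∈ s, (M : Matrix ι ι A) *ᵥ Pi.single j 1 = Pi.single j 1}
  mul_mem' hM hN j hj := by rw [coe_mul, ← mulVec_mulVec, hN j hj, hM j hj]
  one_mem' j _ := by rw [coe_one, one_mulVec]
  inv_mem' {M} hM j hj := by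
    conv_lhs => rw [← hM j hj]
    rw [mulVec_mulVec, ← coe_mul, inv_mul_cancel, coe_one, one_mulVec]

lemma mem_fixingCols_iff {s : Set ι} {M : SpecialLinearGroup ι A} :
    M ∈ fixingCols s ↔ ∀ j ∈ s, ∀ i, M i j = (1 : Matrix ι ι A) i j := by
  simp only [fixingCols, Subgroup.mem_mk, Submonoid.mem_mk, Subsemigroup.mem_mk, Set.mem_ofPred_eq,
    mulVec_single_one, funext_iff, col_apply, Pi.single_apply, one_apply]

lemma fixingCols_anti {s t : Set ι} (h : s ⊆ t) :
    fixingCols t ≤ (fixingCols s : Subgroup (SpecialLinearGroup ι A)) :=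
  fun _ hM j hj => hM j (h hj)

lemma eq_one_of_mem_fixingCols_univ {M : SpecialLinearGroup ι A} (hM : M ∈ fixingCols Set.univ) :
    M = 1 :=
  Subtype.ext <| Matrix.ext fun i j => mem_fixingCols_iff.1 hM j trivial i

lemma apply_self_eq_one_of_mem_fixingCols {k : ι} {M : SpecialLinearGroup ι A}
    (hM : M ∈ fixingCols {k}ᶜ) : M k k = 1 := by
  have hupdate : (M : Matrix ι ι A) = updateCol 1 k fun i => M i k := by
    ext i j
    rcases eq_or_ne j k with rfl | hj
    · simp
    · simp [updateCol_ne hj, mem_fixingCols_iff.1 hM j hj]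
  have hdet := M.det_coe
  rwa [hupdate, ← cramer_apply, cramer_one] at hdet

lemma transvection_mem_elementarySubgroup {i j : ι} (hij : i ≠ j) (c : A) :
    transvection hij c ∈ elementarySubgroup ι A :=
  Subgroup.subset_closure ⟨c, i, j, hij, rfl⟩

lemma transvection_mem_fixingCols {s : Set ι} {i j : ι} (hij : i ≠ j) (c : A) (hj : j ∉ s) :
    transvection hij c ∈ fixingCols s :=
  mem_fixingCols_iff.2 fun l hl a => by
    simp only [transvection_coe, add_apply, single_apply, add_eq_left, ite_eq_right_iff, and_imp]
    rintro - rfl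
    exact absurd hl hj

lemma transvection_mem_inf_fixingCols {s : Set ι} {i j : ι} (hij : i ≠ j) (c : A) (hj : j ∉ s) :
    transvection hij c ∈ elementarySubgroup ι A ⊓ fixingCols s :=
  ⟨transvection_mem_elementarySubgroup hij c, transvection_mem_fixingCols hij c hj⟩

lemma transvection_mul_apply {i j : ι} (hij : i ≠ j) (c : A) (M : SpecialLinearGroup ι A)
    (a b : ι) : (transvection hij c * M) a b = M a b + if a = i then c * M j b else 0 := by
  change (Matrix.transvection i j c * M) a b = _
  split_ifs with ha
  · rw [ha, transvection_mul_apply_same]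
  · rw [transvection_mul_apply_of_ne _ _ _ _ ha, add_zero]

lemma isUnit_apply_self_of_dvd {s : Set ι} {M : SpecialLinearGroup ι A} (hM : M ∈ fixingCols s)
    {k : ι} (hk : k ∉ s) (hdvd : ∀ i ∉ s, M k k ∣ M i k) : IsUnit (M k k) := by
  have hinv := mem_fixingCols_iff.1 (inv_mem hM)
  have hkk : ((M⁻¹ * M : SpecialLinearGroup ι A) : Matrix ι ι A) k k = 1 := by simp
  rw [coe_mul, mul_apply] at hkk
  have hdvd_sum : M k k ∣ ∑ i, M⁻¹ k i * M i k := Finset.dvd_sum fun i _ => by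
    by_cases hi : i ∈ s
    · simp [hinv i hi k, one_apply_ne (ne_of_mem_of_not_mem hi hk).symm]
    · exact dvd_mul_of_dvd_right (hdvd i hi) _
  rw [hkk] at hdvd_sum
  exact isUnit_of_dvd_one hdvd_sum

lemma exists_mul_mem_fixingCols_insert {s : Set ι} {M : SpecialLinearGroup ι A}
    (hM : M ∈ fixingCols s) {k : ι} (hk : k ∉ s) (hkk : M k k = 1) :
    ∃ E ∈ elementarySubgroup ι A, E * M ∈ fixingCols (insert k s) := by
  have hclear : ∀ u : Finset ι, ∃ E ∈ elementarySubgroup ι A ⊓ fixingCols s,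
      (E * M) k k = 1 ∧ ∀ i ∈ u, i ≠ k → (E * M) i k = 0 := by
    intro u
    induction u using Finset.induction_on with
    | empty => exact ⟨1, one_mem _, by simpa using hkk, by simp⟩
    | insert i u hiu ih =>
      obtain ⟨E, hE, hEk, hEu⟩ := ih
      by_cases hik : i = k
      · exact ⟨E, hE, hEk, by simpa [hik] using hEu⟩
      refine ⟨transvection hik (-(E * M) i k) * E,
        mul_mem (transvection_mem_inf_fixingCols hik _ hk) hE, ?_, ?_⟩
      · simp [mul_assoc, transvection_mul_apply, Ne.symm hik, hEk]
      · intro l hl hlk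
        rcases Finset.mem_insert.1 hl with rfl | hl
        · simp [mul_assoc, transvection_mul_apply, hEk]
        · simp [mul_assoc, transvection_mul_apply, hEu l hl hlk, ne_of_mem_of_not_mem hl hiu]
  obtain ⟨E, hE, hEk, hEcol⟩ := hclear Finset.univ
  refine ⟨E, hE.1, mem_fixingCols_iff.2 ?_⟩
  rw [Set.forall_mem_insert]
  refine ⟨fun i => ?_, mem_fixingCols_iff.1 (mul_mem hE.2 hM)⟩
  rcases eq_or_ne i k with rfl | hik
  · simpa using hEk
  · simpa [one_apply_ne hik] using hEcol i (Finset.mem_univ i) hik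

end CommRing

section EuclideanDomain

variable [EuclideanDomain A]

lemma exists_mul_apply_self_eq_mod {s : Set ι} (M : SpecialLinearGroup ι A) {i k : ι} (hik : i ≠ k)
    (hi : i ∉ s) (hk : k ∉ s) :
    ∃ E ∈ elementarySubgroup ι A ⊓ fixingCols s, (E * M) k k = M i k % M k k := by
  have hki := Ne.symm hik
  -- reduce row `i` modulo row `k`, then swap the two rows up to sign
  refine ⟨transvection hki 1 * transvection hik (-1) * transvection hki 1 *
    transvection hik (-(M i k / M k k)), ?_, ?_⟩
  · refine mul_mem (mul_mem (mul_mem ?_ ?_) ?_) ?_ <;>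
      exact transvection_mem_inf_fixingCols _ _ ‹_›
  · simp [mul_assoc, transvection_mul_apply, hik, hki, EuclideanDomain.mod_eq_sub_mul_div]
    ring

lemma exists_mul_isUnit_apply_self_of_ne_zero {s : Set ι} {k : ι} (hk : k ∉ s)
    {M : SpecialLinearGroup ι A} (hM : M ∈ fixingCols s) (h0 : M k k ≠ 0) :
    ∃ E ∈ elementarySubgroup ι A ⊓ fixingCols s, IsUnit ((E * M) k k) := by
  generalize hx : M k k = x at h0
  induction x using (EuclideanDomain.r_wellFounded (R := A)).induction generalizing M with
  | h x ih =>
    by_cases hdvd : ∀ i ∉ s, M k k ∣ M i k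
    · exact ⟨1, one_mem _, by simpa using isUnit_apply_self_of_dvd hM hk hdvd⟩
    push Not at hdvd
    obtain ⟨i, hi, hndvd⟩ := hdvd
    have hik : i ≠ k := by rintro rfl; exact hndvd dvd_rfl
    obtain ⟨E₀, hE₀, hE₀M⟩ := exists_mul_apply_self_eq_mod M hik hi hk
    have hmod : M i k % M k k ≠ 0 := mt EuclideanDomain.mod_eq_zero.1 hndvd
    rw [hx] at hE₀M hmod
    obtain ⟨E₁, hE₁, hunit⟩ :=
      ih _ (EuclideanDomain.mod_lt _ h0) (mul_mem hE₀.2 hM) hE₀M hmod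
    exact ⟨E₁ * E₀, mul_mem hE₁ hE₀, by rwa [mul_assoc]⟩

lemma exists_mul_isUnit_apply_self {s : Set ι} {k : ι} (hk : k ∉ s)
    {M : SpecialLinearGroup ι A} (hM : M ∈ fixingCols s) :
    ∃ E ∈ elementarySubgroup ι A ⊓ fixingCols s, IsUnit ((E * M) k k) := by
  rcases ne_or_eq (M k k) 0 with h0 | h0
  · exact exists_mul_isUnit_apply_self_of_ne_zero hk hM h0
  obtain ⟨i, hi, hMi⟩ : ∃ i ∉ s, M i k ≠ 0 := by
    by_contra! hcol
    refine not_isUnit_zero (h0 ▸ isUnit_apply_self_of_dvd hM hk fun i hi => ?_)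
    rw [hcol i hi]
    exact dvd_zero _
  have hik : i ≠ k := by rintro rfl; exact hMi h0
  obtain ⟨E, hE, hEM⟩ := exists_mul_isUnit_apply_self_of_ne_zero hk
    (mul_mem (transvection_mem_fixingCols (Ne.symm hik) 1 hi) hM)
    (by simpa [transvection_mul_apply, h0] using hMi)
  exact ⟨E * transvection (Ne.symm hik) 1,
    mul_mem hE (transvection_mem_inf_fixingCols _ _ hi), by rwa [mul_assoc]⟩

lemma exists_mul_apply_self_eq_one {s : Set ι} {k r : ι} (hk : k ∉ s) (hr : r ∉ s) (hrk : r ≠ k)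
    {M : SpecialLinearGroup ι A} (hM : M ∈ fixingCols s) :
    ∃ E ∈ elementarySubgroup ι A ⊓ fixingCols s, (E * M) k k = 1 := by
  obtain ⟨E, hE, u, hu⟩ := exists_mul_isUnit_apply_self hk hM
  refine ⟨transvection (Ne.symm hrk) (1 - (u : A)) *
    transvection hrk (↑u⁻¹ * (1 - (E * M) r k)) * E,
    mul_mem (mul_mem (transvection_mem_inf_fixingCols _ _ hr)
      (transvection_mem_inf_fixingCols _ _ hk)) hE, ?_⟩
  simp only [mul_assoc, transvection_mul_apply, if_pos, if_neg hrk.symm, ← hu]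
  linear_combination (1 - (u : A)) * (1 - (E * M : SpecialLinearGroup ι A) r k) * u.inv_mul

end EuclideanDomain

theorem elementarySubgroup_eq_top [EuclideanDomain A] : elementarySubgroup ι A = ⊤ := by
  suffices h : ∀ t : Finset ι, ∀ M ∈ fixingCols (t : Set ι)ᶜ, M ∈ elementarySubgroup ι A from
    eq_top_iff.2 fun M _ => h Finset.univ M (by simp [fixingCols])
  intro t
  induction t using Finset.induction_on with
  | empty => intro M hM; simp [eq_one_of_mem_fixingCols_univ (by simpa using hM), one_mem]
  | insert k t hkt ih =>
    intro M hM
    have hk : k ∉ ((insert k t : Finset ι) : Set ι)ᶜ := by simp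
    obtain ⟨E, hE, hEM⟩ : ∃ E ∈ elementarySubgroup ι A ⊓ fixingCols _, (E * M) k k = 1 := by
      rcases t.eq_empty_or_nonempty with rfl | ⟨r, hr⟩
      · exact ⟨1, one_mem _, by simpa using apply_self_eq_one_of_mem_fixingCols (by simpa using hM)⟩
      · have hrk : r ≠ k := by rintro rfl; exact hkt hr
        exact exists_mul_apply_self_eq_one hk (by simp [hr]) hrk hM
    obtain ⟨F, hF, hFEM⟩ := exists_mul_mem_fixingCols_insert (mul_mem hE.2 hM) hk hEM
    have hsub : ((t : Set ι)ᶜ) ⊆ insert k ((insert k t : Finset ι) : Set ι)ᶜ := by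
      intro x
      simp only [Set.mem_compl_iff, SetLike.mem_coe, Finset.coe_insert, Set.mem_insert_iff, not_or]
      tauto
    have hFEM_mem := ih _ (fixingCols_anti hsub hFEM)
    rwa [← mul_assoc, Subgroup.mul_mem_cancel_left _ (mul_mem hF hE.1)] at hFEM_mem

end Matrix.SpecialLinearGroup

theorem SLn_euclidean_generated_by_elementary_general
    (n : ℕ) (A : Type*) [EuclideanDomain A] :
    Subgroup.closure
      {M : Matrix.SpecialLinearGroup (Fin n) A |
        ∃ (a : A) (i j : Fin n), i ≠ j ∧
          (M : Matrix (Fin n) (Fin n) A) = 1 + Matrix.single i j a} = ⊤ :=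
  Matrix.SpecialLinearGroup.elementarySubgroup_eq_top

/-- For a euclidean domain `A`, `SL n A` is generated by the elementary matrices
`1 + a • e i j`, with `a ∈ A` and `i ≠ j`. -/
theorem SLn_euclidean_generated_by_elementary
    (n : ℕ) (hn : 2 ≤ n) (A : Type*) [EuclideanDomain A] :
    Subgroup.closure
      {M : Matrix.SpecialLinearGroup (Fin n) A |
        ∃ (a : A) (i j : Fin n), i ≠ j ∧
          (M : Matrix (Fin n) (Fin n) A) = 1 + Matrix.single i j a} = ⊤ :=
  SLn_euclidean_generated_by_elementary_general n A
end

section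
/- For every prime p dividing N, the principal congruence subgroup Γ(N) ≤ SL_n(ℤ) is residually p-finite. -/
/-!
If `A ≡ 1 (mod p)` then `A ^ p ^ k ≡ 1 (mod p ^ (k + 1))`, so the image of `Γ(p) ⊇ Γ(N)` in
`SL n (ZMod (p ^ k))` is a finite `p`-group. A matrix `A ≠ 1` has a nonzero entry of `A - 1`,
which is not divisible by `p ^ k` for large `k`, so `A` survives modulo `p ^ k`.
-/

/-- The principal congruence subgroup of level `N` in `SL n ℤ`. -/
def principalCongruenceSubgroup (n N : ℕ) :
    Subgroup (Matrix.SpecialLinearGroup (Fin n) ℤ) :=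
  (Matrix.SpecialLinearGroup.map (n := Fin n) (Int.castRingHom (ZMod N))).ker

open Matrix Polynomial

theorem dvd_pow_pow_sub_one_of_dvd_sub_one {R : Type*} [Ring R] {p : ℕ} {a : R}
    (h : (p : R) ∣ a - 1) (k : ℕ) : (p : R) ^ (k + 1) ∣ a ^ p ^ k - 1 := by
  obtain ⟨b, hb⟩ := h
  obtain rfl : a = 1 + p * b := by rw [← hb]; abel
  -- `a` lies in the commutative image of `ℤ[X]` under `X ↦ b`.
  have hX : (p : ℤ[X]) ∣ (1 + (p : ℤ[X]) * X) - 1 := ⟨X, by ring⟩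
  simpa using _root_.map_dvd (aeval b) (dvd_sub_pow_of_dvd_sub hX k)

theorem Matrix.natCast_dvd_iff {n R : Type*} [Fintype n] [DecidableEq n] [Semiring R] {m : ℕ}
    {M : Matrix n n R} : (m : Matrix n n R) ∣ M ↔ ∀ i j, (m : R) ∣ M i j := by
  simp only [← diagonal_natCast]
  constructor
  · rintro ⟨B, rfl⟩ i j
    exact ⟨B i j, diagonal_mul _ _ _ _⟩
  · intro h
    choose c hc using h
    exact ⟨of c, ext fun i j => by rw [diagonal_mul, of_apply, hc]⟩

theorem mem_principalCongruenceSubgroup_iff {n N : ℕ}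
    {A : Matrix.SpecialLinearGroup (Fin n) ℤ} :
    A ∈ principalCongruenceSubgroup n N ↔
      ∀ i j, (N : ℤ) ∣ ((A : Matrix (Fin n) (Fin n) ℤ) - 1) i j := by
  simp_rw [principalCongruenceSubgroup, MonoidHom.mem_ker, Matrix.SpecialLinearGroup.ext_iff,
    Matrix.SpecialLinearGroup.map_apply_coe, RingHom.mapMatrix_apply, Matrix.map_apply,
    Matrix.sub_apply, ← ZMod.intCast_zmod_eq_zero_iff_dvd, Int.cast_sub, sub_eq_zero,
    Matrix.SpecialLinearGroup.coe_one, one_apply]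
  simp [apply_ite (Int.cast : ℤ → ZMod N)]

theorem mem_principalCongruenceSubgroup_iff_natCast_dvd {n N : ℕ}
    {A : Matrix.SpecialLinearGroup (Fin n) ℤ} :
    A ∈ principalCongruenceSubgroup n N ↔
      (N : Matrix (Fin n) (Fin n) ℤ) ∣ (A : Matrix (Fin n) (Fin n) ℤ) - 1 := by
  rw [mem_principalCongruenceSubgroup_iff, natCast_dvd_iff]

theorem principalCongruenceSubgroup_le_of_dvd {n m N : ℕ} (h : m ∣ N) :
    principalCongruenceSubgroup n N ≤ principalCongruenceSubgroup n m := by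
  intro A hA
  rw [mem_principalCongruenceSubgroup_iff] at hA ⊢
  exact fun i j => (Int.natCast_dvd_natCast.mpr h).trans (hA i j)

theorem pow_pow_mem_principalCongruenceSubgroup {n p : ℕ}
    {A : Matrix.SpecialLinearGroup (Fin n) ℤ}
    (hA : A ∈ principalCongruenceSubgroup n p) (k : ℕ) :
    A ^ p ^ k ∈ principalCongruenceSubgroup n (p ^ (k + 1)) := by
  rw [mem_principalCongruenceSubgroup_iff_natCast_dvd] at hA ⊢
  simpa using dvd_pow_pow_sub_one_of_dvd_sub_one hA k

theorem isPGroup_map_principalCongruenceSubgroup (n p k : ℕ) :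
    IsPGroup p ((principalCongruenceSubgroup n p).map
      (Matrix.SpecialLinearGroup.map (Int.castRingHom (ZMod (p ^ k))))) := by
  rintro ⟨_, A, hA, rfl⟩
  refine ⟨k, Subtype.ext ?_⟩
  rw [SubgroupClass.coe_pow, ← map_pow]
  exact principalCongruenceSubgroup_le_of_dvd (pow_dvd_pow p k.le_succ)
    (pow_pow_mem_principalCongruenceSubgroup hA k)

theorem exists_notMem_principalCongruenceSubgroup_pow {n p : ℕ} (hp : p ≠ 1)
    {A : Matrix.SpecialLinearGroup (Fin n) ℤ} (hA : A ≠ 1) :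
    ∃ k, A ∉ principalCongruenceSubgroup n (p ^ k) := by
  obtain ⟨i, j, hij⟩ : ∃ i j, ((A : Matrix (Fin n) (Fin n) ℤ) - 1) i j ≠ 0 := by
    by_contra! h
    exact hA (Matrix.SpecialLinearGroup.ext _ _ fun i j => sub_eq_zero.mp (h i j))
  obtain ⟨k, hk⟩ := FiniteMultiplicity.def.mp
    (Int.finiteMultiplicity_iff.mpr ⟨(by simpa using hp : (p : ℤ).natAbs ≠ 1), hij⟩)
  refine ⟨k + 1, fun hmem => hk ?_⟩
  exact_mod_cast mem_principalCongruenceSubgroup_iff.mp hmem i j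

/-- For every prime `p` dividing `N`, the principal congruence subgroup
`Γ(N) ≤ SL n ℤ` is residually `p`-finite. -/
theorem principalCongruenceSubgroup_residually_p_finite
    (n N p : ℕ) (hp : p.Prime) (hpN : p ∣ N) :
    ∀ A : principalCongruenceSubgroup n N, A ≠ 1 →
      ∃ (Q : Type) (_ : Group Q), Finite Q ∧ IsPGroup p Q ∧
        ∃ f : principalCongruenceSubgroup n N →* Q, f A ≠ 1 := by
  intro A hA
  obtain ⟨k, hk⟩ := exists_notMem_principalCongruenceSubgroup_pow hp.one_lt.ne'
    (OneMemClass.coe_eq_one.not.mpr hA)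
  have : NeZero (p ^ k) := ⟨pow_ne_zero k hp.ne_zero⟩
  let φ := Matrix.SpecialLinearGroup.map (n := Fin n) (Int.castRingHom (ZMod (p ^ k)))
  let f := φ.comp (principalCongruenceSubgroup n N).subtype
  have hrange : f.range ≤ (principalCongruenceSubgroup n p).map φ := by
    rw [MonoidHom.range_comp, Subgroup.range_subtype]
    exact Subgroup.map_mono (principalCongruenceSubgroup_le_of_dvd hpN)
  refine ⟨f.range, inferInstance, inferInstance,
    (isPGroup_map_principalCongruenceSubgroup n p k).to_le hrange, f.rangeRestrict, ?_⟩
  rw [Ne, ← MonoidHom.mem_ker, MonoidHom.ker_rangeRestrict]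
  exact hk
end

section
/- If F ⊆ F(u) is a field extension such that F(u) is finitely generated as a ring, then u is algebraic over F and F is finitely generated as a ring. -/
/-!
A field `K` that is finitely generated as a ring is finite: `ℤ` is a Jacobson ring, so by the
Nullstellensatz `K` is a finite `ℤ`-module, and it cannot have characteristic zero because `ℤ`,
over which `K` would then be integral, is not a field. Applied to `K = F(u)`, the field `F` is
finite, hence finitely generated, and `F(u)` is a finite extension of `F`, so `u` is algebraic.
-/

theorem isJacobsonRing_of_jacobson_bot_eq_bot {R : Type*} [CommRing R] [NoZeroDivisors R]
    [Ring.KrullDimLE 1 R] (h : (⊥ : Ideal R).jacobson = ⊥) : IsJacobsonRing R := by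
  rw [isJacobsonRing_iff_prime_eq]
  intro P hP
  rcases eq_or_ne P ⊥ with rfl | hP0
  · exact h
  · exact Ideal.jacobson_eq_self_of_isMaximal (H := hP.isMaximal_of_ne_bot hP0)

theorem Int.jacobson_bot : (⊥ : Ideal ℤ).jacobson = ⊥ := by
  refine eq_bot_iff.mpr fun x hx => Ideal.mem_bot.mpr ?_
  rcases Int.isUnit_iff.mp (Ideal.mem_jacobson_bot.mp hx x) with h | h <;> nlinarith

instance Int.instIsJacobsonRing : IsJacobsonRing ℤ :=
  isJacobsonRing_of_jacobson_bot_eq_bot Int.jacobson_bot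

theorem finite_of_field_of_finiteType_int (K : Type*) [Field K] [Algebra.FiniteType ℤ K] :
    Finite K := by
  have : Module.Finite ℤ K := finite_of_finite_type_of_isJacobsonRing ℤ K
  obtain ⟨p, hp⟩ := CharP.exists K
  rcases CharP.char_is_prime_or_zero K p with hprime | rfl
  · have : Fact p.Prime := ⟨hprime⟩
    let _ : Algebra (ZMod p) K := ZMod.algebra K p
    have : Module.Finite (ZMod p) K := .of_restrictScalars_finite ℤ (ZMod p) K
    exact Module.finite_of_finite (ZMod p)
  · have : CharZero K := CharP.charP_to_charZero K
    exact absurd ((Algebra.IsIntegral.isField_iff_isField Int.cast_injective).mpr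
      (Field.toIsField K)) Int.not_isField

/-- If `F ⊆ F(u)` is a field extension such that `F(u)` is finitely generated as a ring
(i.e. as a `ℤ`-algebra), then `u` is algebraic over `F` and `F` is finitely generated
as a ring. -/
theorem algebraic_of_adjoin_fg_as_ring {F E : Type*} [Field F] [Field E] [Algebra F E]
    (u : E) (hfg : (⊤ : Subalgebra ℤ (IntermediateField.adjoin F {u})).FG) :
    IsAlgebraic F u ∧ (⊤ : Subalgebra ℤ F).FG := by
  set K := IntermediateField.adjoin F {u}
  have : Algebra.FiniteType ℤ K := ⟨hfg⟩
  have : Finite K := finite_of_field_of_finiteType_int K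
  have : Finite F := Finite.of_injective (algebraMap F K) (algebraMap F K).injective
  refine ⟨?_, Algebra.FiniteType.out⟩
  have hu : IsIntegral F (⟨u, IntermediateField.mem_adjoin_simple_self F u⟩ : K) :=
    .of_finite F _
  exact (IntermediateField.isIntegral_iff.mp hu).isAlgebraic
end
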